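/- Let Λ^κ denote the minimal solution of the elastic feedback problem with parameter κ > 0. Then for every t ≥ 0, Λ^κ_t decreases monotonically to 0 as κ decreases to 0; in particular lim_{κ→0} Λ^κ_t = 0 for all t ≥ 0. -/

import Mathlib

open MeasureTheory ProbabilityTheory Filter Topology Set

noncomputable section

/-- Running minimum of a path over the time interval `[0, t]`. -/
def runMin (Y : ℝ → ℝ) (t : ℝ) : ℝ := sInf (Y '' Set.Icc 0 t)

/-- The reflection term `L_t = max(0, - inf_{0 ≤ s ≤ t} Y_s)` of the Skorokhod problem. -/
def reflTerm (Y : ℝ → ℝ) (t : ℝ) : ℝ := max 0 (-(runMin Y t))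

/-- First time `t ≥ 0` at which `L_t ≥ x`, valued in `EReal` with `inf ∅ = ⊤`. -/
def hitTime (L : ℝ → ℝ) (x : ℝ) : EReal :=
  sInf ((fun t : ℝ => (t : EReal)) '' {t : ℝ | 0 ≤ t ∧ x ≤ L t})

/-- First time `t ≥ 0` at which `Y_t ≤ 0`, valued in `EReal` with `inf ∅ = ⊤`. -/
def hitZeroTime (Y : ℝ → ℝ) : EReal :=
  sInf ((fun t : ℝ => (t : EReal)) '' {t : ℝ | 0 ≤ t ∧ Y t ≤ 0})

/-- An increasing càdlàg function `Λ : [0,∞) → [0,1]` with `Λ_{0-} = 0`, encoded as a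
function on `ℝ` vanishing on negatives. -/
def IsLossFn (Λ : ℝ → ℝ) : Prop :=
  Monotone Λ ∧ (∀ t : ℝ, ContinuousWithinAt Λ (Set.Ici t) t) ∧
    (∀ t : ℝ, t < 0 → Λ t = 0) ∧ ∀ t : ℝ, Λ t ≤ 1

/-- A standard Brownian motion: starts at `0`, continuous paths, Gaussian increments
`N(0, t-s)`, and independent increments. -/
def IsStandardBM {Ω : Type*} [MeasurableSpace Ω] (P : Measure Ω) (B : ℝ → Ω → ℝ) : Prop :=
  (∀ ω, B 0 ω = 0) ∧ (∀ ω, Continuous fun t => B t ω) ∧ (∀ t, Measurable (B t)) ∧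
    (∀ s t : ℝ, 0 ≤ s → s ≤ t →
      Measure.map (fun ω => B t ω - B s ω) P = gaussianReal 0 (Real.toNNReal (t - s))) ∧
    ∀ (n : ℕ) (t : ℕ → ℝ), Monotone t → 0 ≤ t 0 →
      iIndepFun (fun (i : Fin n) ω => B (t (i + 1)) ω - B (t i) ω) P

/-- The elastic stopping time `τ = inf{t ≥ 0 : L_t ≥ ξ}` for the path `Y_s = X_{0-} + B_s − αΛ_s`. -/
def elasticTau {Ω : Type*} (B : ℝ → Ω → ℝ) (X0 ξ : Ω → ℝ) (α : ℝ) (Λ : ℝ → ℝ) (ω : Ω) : EReal :=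
  hitTime (reflTerm (fun s => X0 ω + B s ω - α * Λ s)) (ξ ω)

/-- `Λ` solves the elastic feedback problem: `Λ` is a loss function and `Λ_t = P(τ ≤ t)` for `t ≥ 0`. -/
def IsElasticSol {Ω : Type*} [MeasurableSpace Ω] (P : Measure Ω) (B : ℝ → Ω → ℝ)
    (X0 ξ : Ω → ℝ) (α : ℝ) (Λ : ℝ → ℝ) : Prop :=
  IsLossFn Λ ∧ ∀ t : ℝ, 0 ≤ t → Λ t = (P {ω | elasticTau B X0 ξ α Λ ω ≤ (t : EReal)}).toReal

/-- The absorbing stopping time `τᵃ = inf{t ≥ 0 : Z_{0-} + B_t − αΛ_t ≤ 0}`. -/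
def absorbTau {Ω : Type*} (B : ℝ → Ω → ℝ) (Z0 : Ω → ℝ) (α : ℝ) (Λ : ℝ → ℝ) (ω : Ω) : EReal :=
  hitZeroTime (fun s => Z0 ω + B s ω - α * Λ s)

/-- `Λ` solves the absorbing feedback problem with initial condition `Z0`. -/
def IsAbsorbingSol {Ω : Type*} [MeasurableSpace Ω] (P : Measure Ω) (B : ℝ → Ω → ℝ)
    (Z0 : Ω → ℝ) (α : ℝ) (Λ : ℝ → ℝ) : Prop :=
  IsLossFn Λ ∧ ∀ t : ℝ, 0 ≤ t → Λ t = (P {ω | absorbTau B Z0 α Λ ω ≤ (t : EReal)}).toReal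

/-- Physical solution of the elastic feedback problem: the jump condition
`ΔΛ_t = inf{x ≥ 0 : P(t < τ, 0 < X_{0-} + ξ + B_t − αΛ_{t−} < αx) < x}`. -/
def IsPhysicalElasticSol {Ω : Type*} [MeasurableSpace Ω] (P : Measure Ω) (B : ℝ → Ω → ℝ)
    (X0 ξ : Ω → ℝ) (α : ℝ) (Λ : ℝ → ℝ) : Prop :=
  IsElasticSol P B X0 ξ α Λ ∧ ∀ t : ℝ, 0 ≤ t →
    Λ t - Function.leftLim Λ t =
      sInf {x : ℝ | 0 ≤ x ∧
        (P {ω | (t : EReal) < elasticTau B X0 ξ α Λ ω ∧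
          0 < X0 ω + ξ ω + B t ω - α * Function.leftLim Λ t ∧
          X0 ω + ξ ω + B t ω - α * Function.leftLim Λ t < α * x}).toReal < x}

/-- `Λ` is the minimal solution of the elastic feedback problem. -/
def IsMinimalElasticSol {Ω : Type*} [MeasurableSpace Ω] (P : Measure Ω) (B : ℝ → Ω → ℝ)
    (X0 ξ : Ω → ℝ) (α : ℝ) (Λ : ℝ → ℝ) : Prop :=
  IsElasticSol P B X0 ξ α Λ ∧
    ∀ Λ' : ℝ → ℝ, IsElasticSol P B X0 ξ α Λ' → ∀ t : ℝ, 0 ≤ t → Λ t ≤ Λ' t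

/-- `ξ` is exponentially distributed with rate `κ`: `P(ξ > x) = e^{-κx}` for `x ≥ 0`. -/
def IsExponential {Ω : Type*} [MeasurableSpace Ω] (P : Measure Ω) (κ : ℝ) (ξ : Ω → ℝ) : Prop :=
  Measurable ξ ∧ ∀ x : ℝ, 0 ≤ x → P {ω | x < ξ ω} = ENNReal.ofReal (Real.exp (-κ * x))

/-- `X0` has a bounded density `f` which changes monotonicity at most finitely often
on every compact interval. -/
def HasNiceDensity {Ω : Type*} [MeasurableSpace Ω] (P : Measure Ω) (X0 : Ω → ℝ) (f : ℝ → ℝ) : Prop :=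
  (∀ x, 0 ≤ f x) ∧ (∃ C : ℝ, ∀ x, f x ≤ C) ∧ Measurable f ∧
    Measure.map X0 P = MeasureTheory.volume.withDensity (fun x => ENNReal.ofReal (f x)) ∧
    ∀ a b : ℝ, a ≤ b → ∃ (n : ℕ) (t : Fin (n + 1) → ℝ), Monotone t ∧ t 0 = a ∧ t (Fin.last n) = b ∧
      ∀ i : Fin n, MonotoneOn f (Set.Icc (t i.castSucc) (t i.succ)) ∨
        AntitoneOn f (Set.Icc (t i.castSucc) (t i.succ))


/-- The Skorokhod reflection map at `0`: `Θ(Y)_t = Y_t + max(0, −inf_{0≤s≤t} Y_s)`. -/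
def skorokhod (Y : ℝ → ℝ) (t : ℝ) : ℝ := Y t + reflTerm Y t

/-!
Monotonicity in `κ` compares fixed points of `Λ ↦ elasticMap … Λ`, the map
`Λ ↦ (t ↦ P(τ ≤ t))`. It is monotone on `ℝ → [0, 1]`, so by Knaster–Tarski its least fixed
point is a solution lying below every pre-fixed point, and the minimal solution lies below it.
A solution `Λ` at a rate `κ₂ ≥ κ₁` is a pre-fixed point for `κ₁`: as `Λ` is right-continuous,
`{τ ≤ t} = {ξ ≤ L_t}`, where `L_t` is a measurable function of `(X_{0-}, B)`, independent of
`ξ`, and `ξ^{κ₁}` is stochastically larger than `ξ^{κ₂}`, so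
`P(ξ^{κ₁} ≤ L_t) ≤ P(ξ^{κ₂} ≤ L_t) = Λ_t`.

For the limit, `Λ^κ ≤ 1` bounds `L_t` by the reflection term `W` of `X_{0-} + B - α`, which does
not depend on `κ`, hence `Λ^κ_t ≤ P(ξ^κ ≤ W) ≤ κ n + P(W > n)` for every `n`.
-/

section Path

variable {Y Y' L : ℝ → ℝ} {s t u v x c : ℝ}

lemma runMin_le (hb : BddBelow (Y '' Icc 0 u)) (hs : s ∈ Icc 0 u) : runMin Y u ≤ Y s :=
  csInf_le hb (mem_image_of_mem Y hs)

lemma le_runMin (hu : 0 ≤ u) (h : ∀ s ∈ Icc 0 u, c ≤ Y s) : c ≤ runMin Y u :=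
  le_csInf ((nonempty_Icc.2 hu).image Y) (forall_mem_image.2 h)

lemma runMin_anti (hb : BddBelow (Y '' Icc 0 v)) (hu : 0 ≤ u) (huv : u ≤ v) :
    runMin Y v ≤ runMin Y u :=
  le_runMin hu fun _ hs => runMin_le hb ⟨hs.1, hs.2.trans huv⟩

lemma runMin_mono (hb : BddBelow (Y '' Icc 0 u)) (hu : 0 ≤ u) (h : Y ≤ Y') :
    runMin Y u ≤ runMin Y' u :=
  le_runMin hu fun s hs => (runMin_le hb hs).trans (h s)

lemma monotoneOn_reflTerm (hb : ∀ u, BddBelow (Y '' Icc 0 u)) :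
    MonotoneOn (reflTerm Y) (Ici 0) :=
  fun _ hu v _ huv => max_le_max le_rfl (neg_le_neg (runMin_anti (hb v) hu huv))

lemma reflTerm_anti (hb : BddBelow (Y '' Icc 0 u)) (hu : 0 ≤ u) (h : Y ≤ Y') :
    reflTerm Y' u ≤ reflTerm Y u :=
  max_le_max le_rfl (neg_le_neg (runMin_mono hb hu h))

lemma continuousWithinAt_runMin (hb : ∀ u, BddBelow (Y '' Icc 0 u)) (ht : 0 ≤ t)
    (hY : ContinuousWithinAt Y (Ici t) t) : ContinuousWithinAt (runMin Y) (Ici t) t := by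
  refine tendsto_order.2 ⟨fun a ha => ?_, fun a ha => ?_⟩
  · obtain ⟨a', haa', ha'⟩ := exists_between ha
    have hYt : a' < Y t := ha'.trans_le (runMin_le (hb t) ⟨ht, le_rfl⟩)
    obtain ⟨c, hc, hsub⟩ := mem_nhdsGE_iff_exists_Ico_subset.1 (hY.eventually (lt_mem_nhds hYt))
    filter_upwards [Ico_mem_nhdsGE hc] with v hv
    refine haa'.trans_le (le_runMin (ht.trans hv.1) fun s hs => ?_)
    rcases le_or_gt s t with hst | hts
    · exact ha'.le.trans (runMin_le (hb t) ⟨hs.1, hst⟩)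
    · exact (hsub ⟨hts.le, hs.2.trans_lt hv.2⟩).le
  · filter_upwards [self_mem_nhdsWithin] with v hv
    exact (runMin_anti (hb v) ht hv).trans_lt ha

lemma continuousWithinAt_reflTerm (hb : ∀ u, BddBelow (Y '' Icc 0 u)) (ht : 0 ≤ t)
    (hY : ContinuousWithinAt Y (Ici t) t) : ContinuousWithinAt (reflTerm Y) (Ici t) t :=
  continuousWithinAt_const.max (continuousWithinAt_runMin hb ht hY).neg

lemma runMin_eq_iInf_rat (ht : 0 ≤ t) (hb : BddBelow (Y '' Icc 0 t))
    (hY : ∀ v ∈ Ico 0 t, UpperSemicontinuousWithinAt Y (Ioi v) v) :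
    runMin Y t = ⨅ q : ℚ, Y (max 0 (min q t)) := by
  -- clamping `q` into `[0, t]` puts both endpoints among the sample points
  have hmem (q : ℚ) : max 0 (min (q : ℝ) t) ∈ Icc 0 t :=
    ⟨le_max_left _ _, max_le ht (min_le_right _ _)⟩
  have hbdd : BddBelow (range fun q : ℚ => Y (max 0 (min q t))) :=
    hb.mono (range_subset_iff.2 fun q => mem_image_of_mem Y (hmem q))
  refine le_antisymm (le_ciInf fun q => runMin_le hb (hmem q)) (le_runMin ht fun v hv => ?_)
  rcases hv.2.eq_or_lt with rfl | hvt
  · obtain ⟨q, hq⟩ := exists_rat_gt v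
    refine (ciInf_le hbdd q).trans_eq ?_
    rw [min_eq_right hq.le, max_eq_right hv.1]
  · refine le_of_forall_pos_le_add fun ε hε => ?_
    obtain ⟨c, hc, hsub⟩ := mem_nhdsGT_iff_exists_Ioo_subset.1
      (hY v ⟨hv.1, hvt⟩ (Y v + ε) (lt_add_of_pos_right _ hε))
    obtain ⟨q, hvq, hqc⟩ := exists_rat_btwn (lt_min hc hvt)
    have hq : max 0 (min (q : ℝ) t) = q := by
      rw [min_eq_left (hqc.trans_le (min_le_right _ _)).le, max_eq_right (hv.1.trans hvq.le)]
    calc ⨅ q : ℚ, Y (max 0 (min q t)) ≤ Y q := (ciInf_le hbdd q).trans_eq (by rw [hq])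
      _ ≤ Y v + ε := (hsub ⟨hvq, hqc.trans_le (min_le_left _ _)⟩).le

lemma hitTime_nonneg (L : ℝ → ℝ) (x : ℝ) : 0 ≤ hitTime L x :=
  le_sInf (forall_mem_image.2 fun _ ht => EReal.coe_nonneg.2 ht.1)

lemma hitTime_le_of_le (hu : 0 ≤ u) (hx : x ≤ L u) : hitTime L x ≤ u :=
  sInf_le (mem_image_of_mem _ ⟨hu, hx⟩)

lemma hitTime_anti {L' : ℝ → ℝ} (h : ∀ u, 0 ≤ u → L u ≤ L' u) : hitTime L' x ≤ hitTime L x :=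
  sInf_le_sInf (image_mono fun u hu => ⟨hu.1, hu.2.trans (h u hu.1)⟩)

lemma hitTime_le_iff_forall_lt (hL : MonotoneOn L (Ici 0)) (ht : 0 ≤ t) :
    hitTime L x ≤ t ↔ ∀ r, t < r → x ≤ L r := by
  refine ⟨fun h r hr => ?_, fun h => EReal.le_of_forall_lt_iff_le.1 fun r hr =>
    hitTime_le_of_le (ht.trans (EReal.coe_lt_coe_iff.1 hr).le) (h r (EReal.coe_lt_coe_iff.1 hr))⟩
  obtain ⟨_, ⟨u, hu, rfl⟩, hur⟩ := sInf_lt_iff.1 (h.trans_lt (EReal.coe_lt_coe_iff.2 hr))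
  exact hu.2.trans (hL hu.1 (ht.trans hr.le) (EReal.coe_lt_coe_iff.1 hur).le)

lemma hitTime_le_iff (hL : MonotoneOn L (Ici 0)) (hrc : ContinuousWithinAt L (Ici t) t)
    (ht : 0 ≤ t) : hitTime L x ≤ t ↔ x ≤ L t := by
  rw [hitTime_le_iff_forall_lt hL ht]
  exact ⟨fun h => ge_of_tendsto (hrc.mono Ioi_subset_Ici_self)
    (eventually_nhdsWithin_of_forall h), fun h r hr => h.trans (hL ht (ht.trans hr.le) hr.le)⟩

end Path

lemma IsLossFn.nonneg {Λ : ℝ → ℝ} (hΛ : IsLossFn Λ) (t : ℝ) : 0 ≤ Λ t :=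
  (hΛ.2.2.1 (min t (-1)) (by linarith [min_le_right t (-1)])).symm.le.trans
    (hΛ.1 (min_le_left t (-1)))

lemma IsLossFn.bddAbove_range {Λ : ℝ → ℝ} (hΛ : IsLossFn Λ) : BddAbove (range Λ) :=
  ⟨1, forall_mem_range.2 hΛ.2.2.2⟩

section FeedbackPath

variable {Ω : Type*} {B : ℝ → Ω → ℝ} {X0 ξ : Ω → ℝ} {α : ℝ} {Λ Λ' : ℝ → ℝ} {ω : Ω} {t : ℝ}

def feedbackPath (B : ℝ → Ω → ℝ) (X0 : Ω → ℝ) (α : ℝ) (Λ : ℝ → ℝ) (ω : Ω) (s : ℝ) : ℝ :=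
  X0 ω + B s ω - α * Λ s

lemma bddBelow_feedbackPath (hB : Continuous fun s => B s ω) (hα : 0 ≤ α)
    (hΛ : BddAbove (range Λ)) (u : ℝ) : BddBelow (feedbackPath B X0 α Λ ω '' Icc 0 u) := by
  obtain ⟨c, hc⟩ := (isCompact_Icc.image hB).bddBelow
  obtain ⟨M, hM⟩ := hΛ
  refine ⟨X0 ω + c - α * M, forall_mem_image.2 fun s hs => ?_⟩
  have hcs : c ≤ B s ω := hc (mem_image_of_mem _ hs)
  have hαΛ : α * Λ s ≤ α * M := mul_le_mul_of_nonneg_left (hM (mem_range_self s)) hα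
  unfold feedbackPath
  linarith

lemma feedbackPath_anti (hα : 0 ≤ α) (h : Λ ≤ Λ') :
    feedbackPath B X0 α Λ' ω ≤ feedbackPath B X0 α Λ ω :=
  fun s => sub_le_sub_left (mul_le_mul_of_nonneg_left (h s) hα) _

lemma continuousWithinAt_feedbackPath (hB : Continuous fun s => B s ω)
    (hΛ : ContinuousWithinAt Λ (Ici t) t) :
    ContinuousWithinAt (feedbackPath B X0 α Λ ω) (Ici t) t :=
  (continuous_const.add hB).continuousWithinAt.sub (continuousWithinAt_const.mul hΛ)

lemma upperSemicontinuousWithinAt_feedbackPath (hB : Continuous fun s => B s ω) (hα : 0 ≤ α)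
    (hΛ : Monotone Λ) (v : ℝ) :
    UpperSemicontinuousWithinAt (feedbackPath B X0 α Λ ω) (Ioi v) v := by
  intro y hy
  have hg : Continuous fun s => X0 ω + B s ω := continuous_const.add hB
  have hcont : ∀ᶠ s in 𝓝[>] v, X0 ω + B s ω < y + α * Λ v :=
    hg.continuousWithinAt.eventually (gt_mem_nhds (by unfold feedbackPath at hy; linarith))
  filter_upwards [hcont, self_mem_nhdsWithin] with s hs hvs
  have : α * Λ v ≤ α * Λ s := mul_le_mul_of_nonneg_left (hΛ hvs.le) hα
  unfold feedbackPath
  linarith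

/-- The reflection term of `x + b - αΛ` at time `T`, with the running minimum taken over a
countable set so that it is measurable in `b` for the product σ-algebra on `ℝ → ℝ`. -/
def ratReflTerm (α : ℝ) (Λ : ℝ → ℝ) (T : ℝ) (p : ℝ × (ℝ → ℝ)) : ℝ :=
  max 0 (-⨅ q : ℚ, (p.1 + p.2 (max 0 (min q T)) - α * Λ (max 0 (min q T))))

lemma measurable_ratReflTerm (α : ℝ) (Λ : ℝ → ℝ) (T : ℝ) :
    Measurable (ratReflTerm α Λ T) :=
  measurable_const.max (Measurable.iInf fun _ => by fun_prop).neg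

lemma reflTerm_feedbackPath_eq_ratReflTerm (hB : Continuous fun s => B s ω) (hα : 0 ≤ α)
    (hΛ : Monotone Λ) (hΛb : BddAbove (range Λ)) (ht : 0 ≤ t) :
    reflTerm (feedbackPath B X0 α Λ ω) t = ratReflTerm α Λ t (X0 ω, fun s => B s ω) := by
  rw [reflTerm, runMin_eq_iInf_rat ht (bddBelow_feedbackPath hB hα hΛb t)
    fun v _ => upperSemicontinuousWithinAt_feedbackPath hB hα hΛ v]
  rfl

lemma measurable_reflTerm_feedbackPath [MeasurableSpace Ω] (hBm : ∀ s, Measurable (B s))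
    (hBc : ∀ ω, Continuous fun s => B s ω) (hX0 : Measurable X0) (hα : 0 ≤ α)
    (hΛ : Monotone Λ) (hΛb : BddAbove (range Λ)) (ht : 0 ≤ t) :
    Measurable fun ω => reflTerm (feedbackPath B X0 α Λ ω) t := by
  simp_rw [reflTerm_feedbackPath_eq_ratReflTerm (hBc _) hα hΛ hΛb ht]
  exact (measurable_ratReflTerm α Λ t).comp (hX0.prodMk (measurable_pi_lambda _ hBm))

lemma setOf_elasticTau_le_eq (hBc : ∀ ω, Continuous fun s => B s ω) (hα : 0 ≤ α)
    (hΛ : IsLossFn Λ) (ht : 0 ≤ t) :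
    {ω | elasticTau B X0 ξ α Λ ω ≤ t} = {ω | ξ ω ≤ reflTerm (feedbackPath B X0 α Λ ω) t} := by
  ext ω
  have hb := bddBelow_feedbackPath (X0 := X0) (hBc ω) hα hΛ.bddAbove_range
  exact hitTime_le_iff (monotoneOn_reflTerm hb)
    (continuousWithinAt_reflTerm hb ht (continuousWithinAt_feedbackPath (hBc ω) (hΛ.2.1 t))) ht

end FeedbackPath

section Measure

variable {Ω : Type*} [MeasurableSpace Ω] {P : Measure Ω}

lemma measurableSet_hitTime_le {L : Ω → ℝ → ℝ} {ξ : Ω → ℝ}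
    (hL : ∀ ω, MonotoneOn (L ω) (Ici 0)) (hLm : ∀ r, 0 ≤ r → Measurable fun ω => L ω r)
    (hξ : Measurable ξ) (t : ℝ) : MeasurableSet {ω | hitTime (L ω) (ξ ω) ≤ t} := by
  rcases lt_or_ge t 0 with ht | ht
  · convert MeasurableSet.empty
    exact eq_empty_of_forall_notMem fun ω h =>
      (h.trans_lt (EReal.coe_lt_coe_iff.2 ht)).not_ge (hitTime_nonneg _ _)
  · have hset : {ω | hitTime (L ω) (ξ ω) ≤ t} = ⋂ q : ℚ, ⋂ (_ : t < q), {ω | ξ ω ≤ L ω q} := by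
      ext ω
      simp only [mem_ofPred_eq, mem_iInter, hitTime_le_iff_forall_lt (hL ω) ht]
      refine ⟨fun h q hq => h q hq, fun h r hr => ?_⟩
      obtain ⟨q, htq, hqr⟩ := exists_rat_btwn hr
      exact (h q htq).trans (hL ω (ht.trans htq.le) (ht.trans hr.le) hqr.le)
    rw [hset]
    exact .iInter fun q => .iInter fun htq => measurableSet_le hξ (hLm q (ht.trans htq.le))

lemma continuousWithinAt_measure_le_toReal [IsFiniteMeasure P] {τ : Ω → EReal}
    (hτ : ∀ t : ℝ, MeasurableSet {ω | τ ω ≤ t}) (t : ℝ) :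
    ContinuousWithinAt (fun t : ℝ => (P {ω | τ ω ≤ t}).toReal) (Ici t) t := by
  rw [← continuousWithinAt_Ioi_iff_Ici]
  have hInter : ⋂ r > t, {ω | τ ω ≤ r} = {ω | τ ω ≤ t} := by
    ext ω
    simp only [mem_iInter, mem_ofPred_eq]
    exact ⟨fun h => EReal.le_of_forall_lt_iff_le.1 fun r hr => h r (EReal.coe_lt_coe_iff.1 hr),
      fun h r hr => h.trans (EReal.coe_le_coe_iff.2 hr.le)⟩
  have hlim := tendsto_measure_biInter_gt (μ := P) (s := fun r : ℝ => {ω | τ ω ≤ r})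
    (fun r _ => (hτ r).nullMeasurableSet)
    (fun _ _ _ hij _ h => h.trans (EReal.coe_le_coe_iff.2 hij))
    ⟨t + 1, lt_add_one t, measure_ne_top _ _⟩
  rw [hInter] at hlim
  exact (ENNReal.tendsto_toReal (measure_ne_top _ _)).comp hlim

section Exponential

variable [IsProbabilityMeasure P] {κ κ₁ κ₂ c : ℝ} {ξ ξ₁ ξ₂ : Ω → ℝ}

lemma IsExponential.measure_le (hξ : IsExponential P κ ξ) (hc : 0 ≤ c) :
    P {ω | ξ ω ≤ c} = 1 - ENNReal.ofReal (Real.exp (-κ * c)) := by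
  have hcompl : {ω | ξ ω ≤ c} = {ω | c < ξ ω}ᶜ := by ext; simp
  rw [hcompl, prob_compl_eq_one_sub (measurableSet_lt measurable_const hξ.1), hξ.2 c hc]

lemma IsExponential.measure_le_of_neg (hξ : IsExponential P κ ξ) (hc : c < 0) :
    P {ω | ξ ω ≤ c} = 0 := by
  have h0 : P {ω | ξ ω ≤ 0} = 0 := by rw [hξ.measure_le le_rfl]; simp
  exact measure_mono_null (fun ω (h : ξ ω ≤ c) => show ξ ω ≤ 0 from h.trans hc.le) h0

lemma IsExponential.measure_le_le_ofReal (hξ : IsExponential P κ ξ) (hκ : 0 ≤ κ) (hc : 0 ≤ c) :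
    P {ω | ξ ω ≤ c} ≤ ENNReal.ofReal (κ * c) := by
  rw [hξ.measure_le hc, tsub_le_iff_right,
    ← ENNReal.ofReal_add (mul_nonneg hκ hc) (Real.exp_nonneg _)]
  exact ENNReal.one_le_ofReal.2 (by linarith [Real.add_one_le_exp (-κ * c)])

lemma IsExponential.measure_le_mono_rate (h₁ : IsExponential P κ₁ ξ₁) (h₂ : IsExponential P κ₂ ξ₂)
    (hκ : κ₁ ≤ κ₂) (c : ℝ) : P {ω | ξ₁ ω ≤ c} ≤ P {ω | ξ₂ ω ≤ c} := by
  rcases lt_or_ge c 0 with hc | hc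
  · rw [h₁.measure_le_of_neg hc]
    exact zero_le
  · rw [h₁.measure_le hc, h₂.measure_le hc]
    refine tsub_le_tsub_left (ENNReal.ofReal_le_ofReal (Real.exp_le_exp.2 ?_)) 1
    nlinarith

lemma tendsto_measure_le_of_isExponential {ξ : ℝ → Ω → ℝ}
    (hξ : ∀ κ, 0 < κ → IsExponential P κ (ξ κ)) {W : Ω → ℝ} (hW : Measurable W) :
    Tendsto (fun κ => P {ω | ξ κ ω ≤ W ω}) (𝓝[>] 0) (𝓝 0) := by
  have htail : Tendsto (fun n : ℕ => P {ω | (n : ℝ) < W ω}) atTop (𝓝 0) := by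
    have hempty : ⋂ n : ℕ, {ω | (n : ℝ) < W ω} = ∅ :=
      eq_empty_of_forall_notMem fun ω h =>
        (exists_nat_ge (W ω)).elim fun n hn => (mem_iInter.1 h n).not_ge hn
    have hlim := tendsto_measure_iInter_atTop (μ := P)
      (s := fun n : ℕ => {ω | (n : ℝ) < W ω})
      (fun _ => (measurableSet_lt measurable_const hW).nullMeasurableSet)
      (fun _ _ hnm _ h => mem_ofPred.2 ((Nat.cast_le.2 hnm).trans_lt h)) ⟨0, measure_ne_top _ _⟩
    rwa [hempty, measure_empty] at hlim
  rw [ENNReal.tendsto_nhds_zero]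
  intro ε hε
  have hε2 : 0 < ε / 2 := ENNReal.half_pos hε.ne'
  obtain ⟨n, hn⟩ := (ENNReal.tendsto_nhds_zero.1 htail _ hε2).exists
  have hlin : Tendsto (fun κ : ℝ => ENNReal.ofReal (κ * n)) (𝓝[>] 0) (𝓝 0) := by
    simpa using ENNReal.tendsto_ofReal
      ((continuous_id.mul continuous_const).tendsto (0 : ℝ) |>.mono_left nhdsWithin_le_nhds)
  filter_upwards [ENNReal.tendsto_nhds_zero.1 hlin _ hε2, self_mem_nhdsWithin] with κ hκ hκ0
  calc P {ω | ξ κ ω ≤ W ω} ≤ P ({ω | ξ κ ω ≤ n} ∪ {ω | (n : ℝ) < W ω}) :=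
        measure_mono fun ω h => (le_or_gt (ξ κ ω) n).imp id fun h' => h'.trans_le h
    _ ≤ P {ω | ξ κ ω ≤ n} + P {ω | (n : ℝ) < W ω} := measure_union_le _ _
    _ ≤ ε / 2 + ε / 2 :=
        add_le_add (((hξ κ hκ0).measure_le_le_ofReal hκ0.le n.cast_nonneg).trans hκ) hn
    _ = ε := ENNReal.add_halves ε

end Exponential

lemma measure_le_comp_eq_lintegral [IsProbabilityMeasure P] {β γ : Type*} [MeasurableSpace β]
    [MeasurableSpace γ] {X : Ω → β} {Z : Ω → γ} {ξ : Ω → ℝ} {F : β × γ → ℝ}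
    (hX : Measurable X) (hZ : Measurable Z) (hξ : Measurable ξ) (hF : Measurable F)
    (hXξ : IndepFun X ξ P) (hXξZ : IndepFun (fun ω => (X ω, ξ ω)) Z P) :
    P {ω | ξ ω ≤ F (X ω, Z ω)} = ∫⁻ z, ∫⁻ x, P {ω | ξ ω ≤ F (x, z)} ∂P.map X ∂P.map Z := by
  have := Measure.isProbabilityMeasure_map (μ := P) hX.aemeasurable
  have := Measure.isProbabilityMeasure_map (μ := P) hZ.aemeasurable
  have := Measure.isProbabilityMeasure_map (μ := P) hξ.aemeasurable
  have hE : MeasurableSet {p : (β × ℝ) × γ | p.1.2 ≤ F (p.1.1, p.2)} :=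
    measurableSet_le (by fun_prop) (by fun_prop)
  change P ((fun ω => ((X ω, ξ ω), Z ω)) ⁻¹' {p : (β × ℝ) × γ | p.1.2 ≤ F (p.1.1, p.2)}) = _
  rw [← Measure.map_apply ((hX.prodMk hξ).prodMk hZ) hE,
    (indepFun_iff_map_prod_eq_prod_map_map (hX.prodMk hξ).aemeasurable hZ.aemeasurable).1 hXξZ,
    (indepFun_iff_map_prod_eq_prod_map_map hX.aemeasurable hξ.aemeasurable).1 hXξ,
    Measure.prod_apply_symm hE]
  refine lintegral_congr fun z => ?_
  rw [Measure.prod_apply (measurable_prodMk_right hE)]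
  refine lintegral_congr fun x => ?_
  rw [Measure.map_apply hξ (measurable_prodMk_left (measurable_prodMk_right hE))]
  rfl

lemma measure_le_comp_mono [IsProbabilityMeasure P] {β γ : Type*} [MeasurableSpace β]
    [MeasurableSpace γ] {X : Ω → β} {Z : Ω → γ} {ξ₁ ξ₂ : Ω → ℝ} {F : β × γ → ℝ}
    (hX : Measurable X) (hZ : Measurable Z) (hξ₁ : Measurable ξ₁) (hξ₂ : Measurable ξ₂)
    (hF : Measurable F) (hXξ₁ : IndepFun X ξ₁ P) (hXξ₂ : IndepFun X ξ₂ P)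
    (hXξ₁Z : IndepFun (fun ω => (X ω, ξ₁ ω)) Z P) (hXξ₂Z : IndepFun (fun ω => (X ω, ξ₂ ω)) Z P)
    (hle : ∀ c, P {ω | ξ₁ ω ≤ c} ≤ P {ω | ξ₂ ω ≤ c}) :
    P {ω | ξ₁ ω ≤ F (X ω, Z ω)} ≤ P {ω | ξ₂ ω ≤ F (X ω, Z ω)} := by
  rw [measure_le_comp_eq_lintegral hX hZ hξ₁ hF hXξ₁ hXξ₁Z,
    measure_le_comp_eq_lintegral hX hZ hξ₂ hF hXξ₂ hXξ₂Z]
  exact lintegral_mono fun _ => lintegral_mono fun _ => hle _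

end Measure

section ElasticMap

variable {Ω : Type*} [MeasurableSpace Ω] {P : Measure Ω} {B : ℝ → Ω → ℝ} {X0 ξ : Ω → ℝ}
  {α : ℝ} {Λ Λ' : ℝ → ℝ}

variable (P B X0 ξ α) in
def elasticMap (Λ : ℝ → ℝ) (t : ℝ) : ℝ := (P {ω | elasticTau B X0 ξ α Λ ω ≤ t}).toReal

lemma elasticMap_of_neg {t : ℝ} (ht : t < 0) : elasticMap P B X0 ξ α Λ t = 0 := by
  have hempty : {ω | elasticTau B X0 ξ α Λ ω ≤ t} = ∅ :=
    eq_empty_of_forall_notMem fun _ h =>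
      (h.trans_lt (EReal.coe_lt_coe_iff.2 ht)).not_ge (hitTime_nonneg _ _)
  simp [elasticMap, hempty]

lemma monotone_elasticMap [IsFiniteMeasure P] : Monotone (elasticMap P B X0 ξ α Λ) :=
  fun _ _ hst => ENNReal.toReal_mono (measure_ne_top _ _)
    (measure_mono fun _ h => le_trans h (EReal.coe_le_coe_iff.2 hst))

lemma elasticMap_nonneg (t : ℝ) : 0 ≤ elasticMap P B X0 ξ α Λ t := ENNReal.toReal_nonneg

lemma elasticMap_le_one [IsProbabilityMeasure P] (t : ℝ) : elasticMap P B X0 ξ α Λ t ≤ 1 :=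
  ENNReal.toReal_le_of_le_ofReal zero_le_one (by simpa using prob_le_one)

lemma elasticMap_mono [IsFiniteMeasure P] (hBc : ∀ ω, Continuous fun s => B s ω) (hα : 0 ≤ α)
    (hΛ' : BddAbove (range Λ')) (h : Λ ≤ Λ') :
    elasticMap P B X0 ξ α Λ ≤ elasticMap P B X0 ξ α Λ' :=
  fun _ => ENNReal.toReal_mono (measure_ne_top _ _) (measure_mono fun ω hω =>
    le_trans (hitTime_anti fun u hu => reflTerm_anti (bddBelow_feedbackPath (hBc ω) hα hΛ' u) hu
      (feedbackPath_anti hα h)) hω)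

lemma measurableSet_elasticTau_le (hBm : ∀ s, Measurable (B s))
    (hBc : ∀ ω, Continuous fun s => B s ω) (hX0 : Measurable X0) (hξ : Measurable ξ)
    (hα : 0 ≤ α) (hΛ : Monotone Λ) (hΛb : BddAbove (range Λ)) (t : ℝ) :
    MeasurableSet {ω | elasticTau B X0 ξ α Λ ω ≤ t} :=
  measurableSet_hitTime_le (fun ω => monotoneOn_reflTerm (bddBelow_feedbackPath (hBc ω) hα hΛb))
    (fun _ hr => measurable_reflTerm_feedbackPath hBm hBc hX0 hα hΛ hΛb hr) hξ t

lemma isLossFn_elasticMap [IsProbabilityMeasure P] (hBm : ∀ s, Measurable (B s))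
    (hBc : ∀ ω, Continuous fun s => B s ω) (hX0 : Measurable X0) (hξ : Measurable ξ)
    (hα : 0 ≤ α) (hΛ : Monotone Λ) (hΛb : BddAbove (range Λ)) :
    IsLossFn (elasticMap P B X0 ξ α Λ) :=
  ⟨monotone_elasticMap, continuousWithinAt_measure_le_toReal
    (measurableSet_elasticTau_le hBm hBc hX0 hξ hα hΛ hΛb), fun _ => elasticMap_of_neg,
    elasticMap_le_one⟩

lemma IsElasticSol.elasticMap_eq (hsol : IsElasticSol P B X0 ξ α Λ) :
    elasticMap P B X0 ξ α Λ = Λ := by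
  ext t
  rcases lt_or_ge t 0 with ht | ht
  · rw [elasticMap_of_neg ht, hsol.1.2.2.1 t ht]
  · exact (hsol.2 t ht).symm

lemma exists_isElasticSol_le [IsProbabilityMeasure P] (hBm : ∀ s, Measurable (B s))
    (hBc : ∀ ω, Continuous fun s => B s ω) (hX0 : Measurable X0) (hξ : Measurable ξ)
    (hα : 0 ≤ α) (hΛ' : ∀ t, Λ' t ∈ unitInterval) (hpre : elasticMap P B X0 ξ α Λ' ≤ Λ') :
    ∃ Λ, IsElasticSol P B X0 ξ α Λ ∧ Λ ≤ Λ' := by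
  have : Fact ((0 : ℝ) ≤ 1) := ⟨zero_le_one⟩
  let Γ : (ℝ → unitInterval) →o (ℝ → unitInterval) :=
    { toFun := fun L t => ⟨elasticMap P B X0 ξ α (fun s => L s) t, elasticMap_nonneg t,
        elasticMap_le_one t⟩
      monotone' := fun L L' h t => elasticMap_mono hBc hα
        ⟨1, forall_mem_range.2 fun s => (L' s).2.2⟩ (fun s => h s) t }
  set Λ : ℝ → ℝ := fun t => OrderHom.lfp Γ t
  have hfix : elasticMap P B X0 ξ α Λ = Λ :=
    funext fun t => congrArg Subtype.val (congrFun (OrderHom.map_lfp Γ) t)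
  have hΛb : BddAbove (range Λ) := ⟨1, forall_mem_range.2 fun t => (OrderHom.lfp Γ t).2.2⟩
  have hΛ : Monotone Λ := hfix ▸ monotone_elasticMap
  refine ⟨Λ, ⟨hfix ▸ isLossFn_elasticMap hBm hBc hX0 hξ hα hΛ hΛb,
    fun t _ => (congrFun hfix t).symm⟩, fun t => ?_⟩
  exact OrderHom.lfp_le Γ (a := fun t => ⟨Λ' t, hΛ' t⟩) (fun t => hpre t) t

lemma IsMinimalElasticSol.le_of_elasticMap_le [IsProbabilityMeasure P]
    (hmin : IsMinimalElasticSol P B X0 ξ α Λ) (hBm : ∀ s, Measurable (B s))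
    (hBc : ∀ ω, Continuous fun s => B s ω) (hX0 : Measurable X0) (hξ : Measurable ξ)
    (hα : 0 ≤ α) (hΛ' : ∀ t, Λ' t ∈ unitInterval) (hpre : elasticMap P B X0 ξ α Λ' ≤ Λ')
    {t : ℝ} (ht : 0 ≤ t) : Λ t ≤ Λ' t :=
  let ⟨_, hsol, hle⟩ := exists_isElasticSol_le hBm hBc hX0 hξ hα hΛ' hpre
  (hmin.2 _ hsol t ht).trans (hle t)

lemma elasticMap_le_of_rate_le [IsProbabilityMeasure P] (hBm : ∀ s, Measurable (B s))
    (hBc : ∀ ω, Continuous fun s => B s ω) (hX0 : Measurable X0) (hα : 0 ≤ α)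
    {κ₁ κ₂ : ℝ} {ξ₁ ξ₂ : Ω → ℝ} (hξ₁ : IsExponential P κ₁ ξ₁) (hξ₂ : IsExponential P κ₂ ξ₂)
    (hκ : κ₁ ≤ κ₂) (hX0ξ₁ : IndepFun X0 ξ₁ P) (hX0ξ₂ : IndepFun X0 ξ₂ P)
    (hB₁ : IndepFun (fun ω => (X0 ω, ξ₁ ω)) (fun ω => fun t => B t ω) P)
    (hB₂ : IndepFun (fun ω => (X0 ω, ξ₂ ω)) (fun ω => fun t => B t ω) P) (hΛ : IsLossFn Λ) :
    elasticMap P B X0 ξ₁ α Λ ≤ elasticMap P B X0 ξ₂ α Λ := by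
  intro t
  rcases lt_or_ge t 0 with ht | ht
  · rw [elasticMap_of_neg ht, elasticMap_of_neg ht]
  · refine ENNReal.toReal_mono (measure_ne_top _ _) ?_
    simp_rw [setOf_elasticTau_le_eq hBc hα hΛ ht,
      reflTerm_feedbackPath_eq_ratReflTerm (hBc _) hα hΛ.1 hΛ.bddAbove_range ht]
    exact measure_le_comp_mono hX0 (measurable_pi_lambda _ hBm) hξ₁.1 hξ₂.1
      (measurable_ratReflTerm α Λ t) hX0ξ₁ hX0ξ₂ hB₁ hB₂ (hξ₁.measure_le_mono_rate hξ₂ hκ)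

lemma IsMinimalElasticSol.le_of_rate_le [IsProbabilityMeasure P] {Λ₁ Λ₂ : ℝ → ℝ}
    (hBm : ∀ s, Measurable (B s)) (hBc : ∀ ω, Continuous fun s => B s ω)
    (hX0 : Measurable X0) (hα : 0 ≤ α) {κ₁ κ₂ : ℝ} {ξ₁ ξ₂ : Ω → ℝ}
    (hξ₁ : IsExponential P κ₁ ξ₁) (hξ₂ : IsExponential P κ₂ ξ₂) (hκ : κ₁ ≤ κ₂)
    (hX0ξ₁ : IndepFun X0 ξ₁ P) (hX0ξ₂ : IndepFun X0 ξ₂ P)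
    (hB₁ : IndepFun (fun ω => (X0 ω, ξ₁ ω)) (fun ω => fun t => B t ω) P)
    (hB₂ : IndepFun (fun ω => (X0 ω, ξ₂ ω)) (fun ω => fun t => B t ω) P)
    (hmin : IsMinimalElasticSol P B X0 ξ₁ α Λ₁) (hsol : IsElasticSol P B X0 ξ₂ α Λ₂)
    {t : ℝ} (ht : 0 ≤ t) : Λ₁ t ≤ Λ₂ t :=
  hmin.le_of_elasticMap_le hBm hBc hX0 hξ₁.1 hα (fun s => ⟨hsol.1.nonneg s, hsol.1.2.2.2 s⟩)
    ((elasticMap_le_of_rate_le hBm hBc hX0 hα hξ₁ hξ₂ hκ hX0ξ₁ hX0ξ₂ hB₁ hB₂ hsol.1).trans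
      hsol.elasticMap_eq.le) ht

lemma IsElasticSol.le_measure_le_reflTerm [IsFiniteMeasure P]
    (hsol : IsElasticSol P B X0 ξ α Λ) (hBc : ∀ ω, Continuous fun s => B s ω) (hα : 0 ≤ α)
    {t : ℝ} (ht : 0 ≤ t) : Λ t ≤ (P {ω | ξ ω ≤ reflTerm (feedbackPath B X0 α 1 ω) t}).toReal := by
  rw [hsol.2 t ht, setOf_elasticTau_le_eq hBc hα hsol.1 ht]
  refine ENNReal.toReal_mono (measure_ne_top _ _)
    (measure_mono fun ω (hω : ξ ω ≤ _) => show ξ ω ≤ _ from hω.trans ?_)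
  exact reflTerm_anti (bddBelow_feedbackPath (hBc ω) hα ⟨1, forall_mem_range.2 fun _ => le_rfl⟩ t)
    ht (feedbackPath_anti hα fun s => hsol.1.2.2.2 s)

end ElasticMap

theorem statement_13_general {Ω : Type*} [MeasurableSpace Ω] (P : Measure Ω) [IsProbabilityMeasure P]
    (α : ℝ) (hα : 0 < α)
    (B : ℝ → Ω → ℝ) (X0 : Ω → ℝ) (ξ : ℝ → Ω → ℝ)
    (hB : IsStandardBM P B)
    (hX0meas : Measurable X0)
    (hξ : ∀ κ : ℝ, 0 < κ → IsExponential P κ (ξ κ))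
    (hindepX0ξ : ∀ κ : ℝ, 0 < κ → IndepFun X0 (ξ κ) P)
    (hindepB : ∀ κ : ℝ, 0 < κ → IndepFun (fun ω => (X0 ω, ξ κ ω)) (fun ω => fun t => B t ω) P)
    (Λ : ℝ → ℝ → ℝ)
    (hmin : ∀ κ : ℝ, 0 < κ → IsMinimalElasticSol P B X0 (ξ κ) α (Λ κ)) :
    (∀ t : ℝ, 0 ≤ t → ∀ κ₁ κ₂ : ℝ, 0 < κ₁ → κ₁ ≤ κ₂ → Λ κ₁ t ≤ Λ κ₂ t) ∧
      ∀ t : ℝ, 0 ≤ t →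
        Filter.Tendsto (fun κ : ℝ => Λ κ t) (nhdsWithin 0 (Set.Ioi 0)) (nhds 0) := by
  have hBc : ∀ ω, Continuous fun s => B s ω := hB.2.1
  have hBm : ∀ s, Measurable (B s) := hB.2.2.1
  refine ⟨fun t ht κ₁ κ₂ hκ₁ hκ => ?_, fun t ht => ?_⟩
  · have hκ₂ := hκ₁.trans_le hκ
    exact (hmin κ₁ hκ₁).le_of_rate_le hBm hBc hX0meas hα.le (hξ κ₁ hκ₁) (hξ κ₂ hκ₂) hκ
      (hindepX0ξ κ₁ hκ₁) (hindepX0ξ κ₂ hκ₂) (hindepB κ₁ hκ₁) (hindepB κ₂ hκ₂) (hmin κ₂ hκ₂).1 ht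
  · have hW : Measurable fun ω => reflTerm (feedbackPath B X0 α 1 ω) t :=
      measurable_reflTerm_feedbackPath hBm hBc hX0meas hα.le monotone_const
        ⟨1, forall_mem_range.2 fun _ => le_rfl⟩ ht
    have hlim := (ENNReal.tendsto_toReal ENNReal.zero_ne_top).comp
      (tendsto_measure_le_of_isExponential hξ hW)
    rw [ENNReal.toReal_zero] at hlim
    refine tendsto_of_tendsto_of_tendsto_of_le_of_le' tendsto_const_nhds hlim ?_ ?_ <;>
      filter_upwards [self_mem_nhdsWithin] with κ hκ
    · exact (hmin κ hκ).1.1.nonneg t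
    · exact (hmin κ hκ).1.le_measure_le_reflTerm hBc hα.le ht

/-- for every `t ≥ 0`, the minimal solution `Λ^κ_t` of the elastic feedback
problem decreases monotonically to `0` as `κ` decreases to `0`. -/
theorem statement_13 {Ω : Type*} [MeasurableSpace Ω] (P : Measure Ω) [IsProbabilityMeasure P]
    (α : ℝ) (hα : 0 < α)
    (B : ℝ → Ω → ℝ) (X0 : Ω → ℝ) (ξ : ℝ → Ω → ℝ)
    (hB : IsStandardBM P B)
    (hX0meas : Measurable X0) (hX0nonneg : ∀ ω, 0 ≤ X0 ω)
    (hξ : ∀ κ : ℝ, 0 < κ → IsExponential P κ (ξ κ))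
    (hindepX0ξ : ∀ κ : ℝ, 0 < κ → IndepFun X0 (ξ κ) P)
    (hindepB : ∀ κ : ℝ, 0 < κ → IndepFun (fun ω => (X0 ω, ξ κ ω)) (fun ω => fun t => B t ω) P)
    (Λ : ℝ → ℝ → ℝ)
    (hmin : ∀ κ : ℝ, 0 < κ → IsMinimalElasticSol P B X0 (ξ κ) α (Λ κ)) :
    (∀ t : ℝ, 0 ≤ t → ∀ κ₁ κ₂ : ℝ, 0 < κ₁ → κ₁ ≤ κ₂ → Λ κ₁ t ≤ Λ κ₂ t) ∧
      ∀ t : ℝ, 0 ≤ t →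
        Filter.Tendsto (fun κ : ℝ => Λ κ t) (nhdsWithin 0 (Set.Ioi 0)) (nhds 0) :=
  statement_13_general P α hα B X0 ξ hB hX0meas hξ hindepX0ξ hindepB Λ hmin

end
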